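/- The set of points x ∈ [0, 1] whose trajectory under the paradoxical map converges to the origin, i.e., {x ∈ [0,1] : φ^n(x) → 0 as n → ∞}, has Lebesgue measure zero. In other words, with probability one, trajectories with initial conditions sampled according to the Lebesgue measure on [0,1] do not converge to the origin. -/

import Mathlib

/-!
On `(0, 1/2)` the map satisfies `1/φ(x) = 1/x - 1`. An orbit converging to `0` without ever
hitting `0` eventually stays in `(0, 1/2)`, where the reciprocals decrease by `1` at each step
and so become negative: impossible. Hence such an orbit reaches `0` after finitely many steps.
Since `φ` is at most two-to-one on `[0, 1]`, with inverse branches `y ↦ y/(1+y)` and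
`y ↦ 1 - y/2`, the points of `[0, 1]` reaching `0` form a countable set.
-/

open MeasureTheory

/-- The paradoxical map: `φ(x) = x/(1-x)` for `x ∈ (0, 1/2)`, `φ(x) = 2(1-x)` for
`x ∈ [1/2, 1]`, and `φ(x) = 0` otherwise (in particular `φ(0) = 0`). -/
noncomputable def psi (x : ℝ) : ℝ :=
  if 0 < x ∧ x < 1 / 2 then x / (1 - x)
  else if 1 / 2 ≤ x ∧ x ≤ 1 then 2 * (1 - x)
  else 0

open Set Filter Topology

lemma psi_mem_Icc (x : ℝ) : psi x ∈ Icc (0 : ℝ) 1 := by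
  unfold psi
  split_ifs with h₁ h₂
  · have h : 0 < 1 - x := by linarith [h₁.2]
    exact ⟨div_nonneg h₁.1.le h.le, (div_le_one h).2 (by linarith [h₁.2])⟩
  · exact ⟨by linarith [h₂.2], by linarith [h₂.1]⟩
  · simp

lemma psi_of_pos_of_lt_half {x : ℝ} (h₀ : 0 < x) (h : x < 1 / 2) : psi x = x / (1 - x) := by
  simp only [psi, if_pos (And.intro h₀ h)]

lemma inv_psi_of_pos_of_lt_half {x : ℝ} (h₀ : 0 < x) (h : x < 1 / 2) :
    (psi x)⁻¹ = x⁻¹ - 1 := by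
  rw [psi_of_pos_of_lt_half h₀ h, inv_div, sub_div, div_self h₀.ne', one_div]

lemma eq_psi_div_or_eq_one_sub_psi_div {x : ℝ} (hx : x ∈ Icc (0 : ℝ) 1) :
    x = psi x / (1 + psi x) ∨ x = 1 - psi x / 2 := by
  rcases hx.1.eq_or_lt with rfl | h₀
  · left; norm_num [psi]
  by_cases h : x < 1 / 2
  · left
    have : 1 - x ≠ 0 := by linarith
    rw [psi_of_pos_of_lt_half h₀ h]
    field_simp
    ring
  · right
    simp only [psi, if_neg (fun h' : 0 < x ∧ x < 1 / 2 => h h'.2),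
      if_pos (And.intro (not_lt.1 h) hx.2)]
    ring

lemma countable_Icc_inter_preimage_psi {s : Set ℝ} (hs : s.Countable) :
    (Icc (0 : ℝ) 1 ∩ psi ⁻¹' s).Countable := by
  refine ((hs.image fun y => y / (1 + y)).union (hs.image fun y => 1 - y / 2)).mono ?_
  rintro x ⟨hx, hxs⟩
  rcases eq_psi_div_or_eq_one_sub_psi_div hx with h | h
  · exact Or.inl ⟨psi x, hxs, h.symm⟩
  · exact Or.inr ⟨psi x, hxs, h.symm⟩

lemma countable_Icc_inter_preimage_iterate_psi_zero (n : ℕ) :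
    (Icc (0 : ℝ) 1 ∩ psi^[n] ⁻¹' {0}).Countable := by
  induction n with
  | zero => exact (countable_singleton 0).mono inter_subset_right
  | succ n ih =>
    refine (countable_Icc_inter_preimage_psi ih).mono ?_
    rintro x ⟨hx, hxn⟩
    exact ⟨hx, psi_mem_Icc x, hxn⟩

lemma not_forall_pos_of_inv_succ_eq_inv_sub_one {u : ℕ → ℝ}
    (hu : ∀ k, (u (k + 1))⁻¹ = (u k)⁻¹ - 1) : ¬ ∀ k, 0 < u k := by
  intro hpos
  have hinv : ∀ k : ℕ, (u k)⁻¹ = (u 0)⁻¹ - k := by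
    intro k
    induction k with
    | zero => simp
    | succ k ih => rw [hu, ih]; push_cast; ring
  obtain ⟨k, hk⟩ := exists_nat_gt (u 0)⁻¹
  have := inv_pos.2 (hpos k)
  linarith [hinv k]

lemma exists_iterate_psi_eq_zero_of_tendsto {x : ℝ}
    (h : Tendsto (fun n => psi^[n] x) atTop (𝓝 0)) : ∃ n, psi^[n] x = 0 := by
  by_contra! hne
  have hpos : ∀ n, 0 < psi^[n + 1] x := by
    intro n
    have hnonneg : 0 ≤ psi^[n + 1] x := by
      rw [Function.iterate_succ_apply']
      exact (psi_mem_Icc _).1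
    exact hnonneg.lt_of_ne' (hne _)
  obtain ⟨N, hN⟩ := eventually_atTop.1 (h.eventually (gt_mem_nhds one_half_pos))
  refine not_forall_pos_of_inv_succ_eq_inv_sub_one (u := fun k => psi^[N + k + 1] x)
    (fun k => ?_) (fun k => hpos _)
  rw [show N + (k + 1) + 1 = (N + k + 1) + 1 by ring, Function.iterate_succ_apply']
  exact inv_psi_of_pos_of_lt_half (hpos _) (hN _ (by omega))

/-- The set of points of `[0,1]` whose trajectory under the paradoxical map converges to the
origin has Lebesgue measure zero. -/
theorem stmt_11 :
    volume {x : ℝ | x ∈ Set.Icc (0 : ℝ) 1 ∧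
      Filter.Tendsto (fun n => psi^[n] x) Filter.atTop (nhds 0)} = 0 := by
  have hsub : {x : ℝ | x ∈ Set.Icc (0 : ℝ) 1 ∧
      Filter.Tendsto (fun n => psi^[n] x) Filter.atTop (nhds 0)} ⊆
      ⋃ n, Icc (0 : ℝ) 1 ∩ psi^[n] ⁻¹' {0} := by
    rintro x ⟨hx, hlim⟩
    obtain ⟨n, hn⟩ := exists_iterate_psi_eq_zero_of_tendsto hlim
    exact mem_iUnion.2 ⟨n, hx, hn⟩
  exact measure_mono_null hsub
    ((countable_iUnion countable_Icc_inter_preimage_iterate_psi_zero).measure_zero _)
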